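/- The 9-point filter with weights (−1/256, 1/32, −7/64, 7/32, 93/128, 7/32, −7/64, 1/32, −1/256) has Fourier symbol ℱ(θ) = 93/128 + (7/16)cos θ − (7/32)cos 2θ + (1/16)cos 3θ − (1/128)cos 4θ satisfying ℱ(θ) = 1 + O(θ⁸) as θ → 0: all derivatives of ℱ at 0 up to order 7 vanish and ℱ(0) = 1. -/

import Mathlib

/-!
Write the symbol as a cosine polynomial `∑ₖ aₖ cos (kθ)`. Its `n`-th derivative at `0` is
`(∑ₖ aₖ kⁿ) · cos⁽ⁿ⁾(0)`; this vanishes for odd `n` because `cos⁽ⁿ⁾(0) = ± sin 0`, and for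
`n = 2, 4, 6` because the even moments `∑ₖ aₖ k²ᵐ` of the filter's coefficients vanish.
The value at `0` is `∑ₖ aₖ = 1`.
-/

open Real Finset

noncomputable section

def cosPoly {N : ℕ} (a : Fin N → ℝ) (θ : ℝ) : ℝ :=
  ∑ k, a k * cos (k * θ)

lemma iteratedDeriv_cos_zero_of_odd {n : ℕ} (hn : Odd n) : iteratedDeriv n cos 0 = 0 := by
  obtain ⟨m, rfl⟩ := hn
  simp

lemma iteratedDeriv_cosPoly_zero {N : ℕ} (a : Fin N → ℝ) (n : ℕ) :
    iteratedDeriv n (cosPoly a) 0 = (∑ k, a k * (k : ℝ) ^ n) * iteratedDeriv n cos 0 := by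
  have hcos (k : ℝ) : iteratedDeriv n (fun θ => cos (k * θ)) 0 = k ^ n * iteratedDeriv n cos 0 := by
    simpa using congrFun (iteratedDeriv_comp_const_mul contDiff_cos k) 0
  unfold cosPoly
  rw [iteratedDeriv_fun_sum (f := fun k θ => a k * cos (k * θ)) fun k _ => by fun_prop, sum_mul]
  simp only [iteratedDeriv_const_mul_field, hcos, mul_assoc]

/-- Coefficient of `cos (kθ)` in the symbol: twice the filter weight at offset `±k` (`k ≥ 1`). -/
def filterSymbolCoeff : Fin 5 → ℝ := ![93 / 128, 7 / 16, -7 / 32, 1 / 16, -1 / 128]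

lemma sum_filterSymbolCoeff_mul_pow_eq_zero {m : ℕ} (hm1 : 1 ≤ m) (hm3 : m ≤ 3) :
    ∑ k, filterSymbolCoeff k * (k : ℝ) ^ (2 * m) = 0 := by
  interval_cases m <;> simp [Fin.sum_univ_five, filterSymbolCoeff] <;> norm_num

end

/-- The 9-point filter has Fourier symbol
ℱ(θ) = 93/128 + (7/16)cos θ − (7/32)cos 2θ + (1/16)cos 3θ − (1/128)cos 4θ
satisfying ℱ(θ) = 1 + O(θ⁸): ℱ(0) = 1 and all derivatives at 0 up to order 7 vanish. -/
theorem stmt14 (F : ℝ → ℝ)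
    (hF : ∀ θ, F θ = 93 / 128 + (7 / 16) * Real.cos θ - (7 / 32) * Real.cos (2 * θ)
        + (1 / 16) * Real.cos (3 * θ) - (1 / 128) * Real.cos (4 * θ)) :
    F 0 = 1 ∧ ∀ n : ℕ, 1 ≤ n → n ≤ 7 → iteratedDeriv n F 0 = 0 := by
  have hF_eq_cosPoly : F = cosPoly filterSymbolCoeff := by
    funext θ
    simp only [hF, cosPoly, filterSymbolCoeff, Fin.sum_univ_five, Fin.isValue,
      Matrix.cons_val_zero, Matrix.cons_val_one, Matrix.cons_val, Fin.coe_ofNat_eq_mod,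
      Nat.reduceMod, Nat.zero_mod, Nat.one_mod, Nat.cast_ofNat, Nat.cast_one, CharP.cast_eq_zero,
      zero_mul, one_mul, cos_zero, mul_one]
    ring
  refine ⟨by norm_num [hF], fun n h1 h7 => ?_⟩
  rw [hF_eq_cosPoly, iteratedDeriv_cosPoly_zero]
  rcases Nat.even_or_odd n with ⟨m, rfl⟩ | hn
  · rw [← two_mul, sum_filterSymbolCoeff_mul_pow_eq_zero (by omega) (by omega), zero_mul]
  · rw [iteratedDeriv_cos_zero_of_odd hn, mul_zero]
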